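/- arXiv:2010.10878 — 5 statements merged into one kernel-verified Lean document; each statement's English description precedes it below -/
import Mathlib

section
/- Let ψ be a K-strongly convex regularizer on a compact convex subset Z of a normed Euclidean space (R^D, ‖·‖), with induced mirror map Φ and Fenchel coupling F. Then for every p ∈ Z and y ∈ R^D: F(p, y) ≥ (K/2)‖Φ(y) − p‖². -/
open scoped BigOperators

noncomputable section

/-- The standard duality pairing on `ℝ^D`. -/
def stdPair {D : ℕ} (x y : Fin D → ℝ) : ℝ := ∑ j, x j * y j

/-- A norm on `ℝ^D`, given as explicit data. -/
structure NormOn (D : ℕ) where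
  toFun : (Fin D → ℝ) → ℝ
  add_le' : ∀ x y, toFun (x + y) ≤ toFun x + toFun y
  smul' : ∀ (c : ℝ) (x : Fin D → ℝ), toFun (c • x) = |c| * toFun x
  eq_zero' : ∀ x, toFun x = 0 → x = 0

instance {D : ℕ} : CoeFun (NormOn D) (fun _ => (Fin D → ℝ) → ℝ) := ⟨NormOn.toFun⟩

/-- The dual norm `‖y‖_* = sup_{‖x‖ ≤ 1} ⟨x, y⟩` of a norm on `ℝ^D`. -/
def dualNorm {D : ℕ} (nrm : NormOn D) (y : Fin D → ℝ) : ℝ :=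
  sSup ((fun x => stdPair x y) '' {x | nrm x ≤ 1})

/-- The convex conjugate `ψ*(y) = max_{x ∈ Z} (⟨x, y⟩ − ψ(x))` of `ψ : Z → ℝ`. -/
def conjFn {D : ℕ} (Z : Set (Fin D → ℝ)) (ψ : (Fin D → ℝ) → ℝ) (y : Fin D → ℝ) : ℝ :=
  sSup ((fun x => stdPair x y - ψ x) '' Z)

/-- The Fenchel coupling `F(p, y) = ψ(p) + ψ*(y) − ⟨y, p⟩`. -/
def fenchelCoupling {D : ℕ} (Z : Set (Fin D → ℝ)) (ψ : (Fin D → ℝ) → ℝ)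
    (p y : Fin D → ℝ) : ℝ :=
  ψ p + conjFn Z ψ y - stdPair y p

lemma stdPair_comm {D : ℕ} (x y : Fin D → ℝ) : stdPair x y = stdPair y x := by
  simp [stdPair, mul_comm]

lemma stdPair_comb {D : ℕ} (y p q : Fin D → ℝ) (a b : ℝ) :
    stdPair y (a • p + b • q) = a * stdPair y p + b * stdPair y q := by
  simp [stdPair, mul_add, Finset.sum_add_distrib, Finset.mul_sum]
  congr 1 <;> exact Finset.sum_congr rfl (fun j _ => by ring)

lemma normOn_sub_symm {D : ℕ} (nrm : NormOn D) (p q : Fin D → ℝ) :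
    nrm (q - p) = nrm (p - q) := by
  have h := nrm.smul' (-1) (p - q)
  rw [neg_one_smul, neg_sub] at h
  simpa using h

/-- **Lower bound of the Fenchel coupling by the norm.**
Let `ψ` be a `K`-strongly convex regularizer on a compact convex subset `Z` of the normed
Euclidean space `(ℝ^D, ‖·‖)`, with induced mirror map `Φ` and Fenchel coupling `F`.
Then for every `p ∈ Z` and `y ∈ ℝ^D`:  `F(p, y) ≥ (K/2) ‖Φ(y) − p‖²`. -/
theorem fenchel_coupling_lower_bound {D : ℕ} (nrm : NormOn D) (Z : Set (Fin D → ℝ))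
    (hZne : Z.Nonempty) (hZcomp : IsCompact Z) (hZconv : Convex ℝ Z)
    (K : ℝ) (hK : 0 < K)
    (ψ : (Fin D → ℝ) → ℝ) (hψcont : ContinuousOn ψ Z)
    (hψsc : ∀ x ∈ Z, ∀ y ∈ Z, ∀ t ∈ Set.Icc (0 : ℝ) 1,
      ψ (t • x + (1 - t) • y) ≤
        t * ψ x + (1 - t) * ψ y - K / 2 * t * (1 - t) * (nrm (x - y)) ^ 2)
    (Φ : (Fin D → ℝ) → (Fin D → ℝ))
    (hΦmem : ∀ y, Φ y ∈ Z)
    (hΦmax : ∀ y, ∀ x ∈ Z, stdPair y x - ψ x ≤ stdPair y (Φ y) - ψ (Φ y)) :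
    ∀ p ∈ Z, ∀ y, K / 2 * (nrm (Φ y - p)) ^ 2 ≤ fenchelCoupling Z ψ p y := by
  intro p hp y
  have hqZ := hΦmem y
  have main : ∀ t ∈ Set.Ioo (0:ℝ) 1,
      K / 2 * (1 - t) * (nrm (p - Φ y)) ^ 2 ≤
        ψ p - ψ (Φ y) - (stdPair y p - stdPair y (Φ y)) := by
    intro t ht
    have hz : t • p + (1 - t) • Φ y ∈ Z :=
      hZconv hp hqZ ht.1.le (by linarith [ht.2]) (by ring)
    have h1 := hψsc p hp (Φ y) hqZ t ⟨ht.1.le, ht.2.le⟩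
    have h2 := hΦmax y _ hz
    rw [stdPair_comb] at h2
    have h3 : t * (K / 2 * (1 - t) * (nrm (p - Φ y)) ^ 2) ≤
        t * (ψ p - ψ (Φ y) - (stdPair y p - stdPair y (Φ y))) := by nlinarith
    exact le_of_mul_le_mul_left h3 ht.1
  have key : K / 2 * (nrm (p - Φ y)) ^ 2 ≤
      ψ p - ψ (Φ y) - (stdPair y p - stdPair y (Φ y)) := by
    have hten : Filter.Tendsto (fun t : ℝ => K / 2 * (1 - t) * (nrm (p - Φ y)) ^ 2)
        (nhdsWithin 0 (Set.Ioi 0)) (nhds (K / 2 * (nrm (p - Φ y)) ^ 2)) := by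
      have hcont : Continuous (fun t : ℝ => K / 2 * (1 - t) * (nrm (p - Φ y)) ^ 2) :=
        (continuous_const.mul (continuous_const.sub continuous_id)).mul continuous_const
      have := (hcont.tendsto 0).mono_left (nhdsWithin_le_nhds (s := Set.Ioi (0:ℝ)))
      simpa using this
    refine le_of_tendsto hten ?_
    filter_upwards [Ioo_mem_nhdsGT_of_mem (Set.mem_Ico.mpr ⟨le_refl (0:ℝ), one_pos⟩)]
      with t ht using main t ht
  have hbdd : BddAbove ((fun x => stdPair x y - ψ x) '' Z) := by
    refine ⟨stdPair y (Φ y) - ψ (Φ y), ?_⟩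
    rintro _ ⟨x, hx, rfl⟩
    dsimp only
    rw [stdPair_comm]
    exact hΦmax y x hx
  have hconj : stdPair (Φ y) y - ψ (Φ y) ≤ conjFn Z ψ y :=
    le_csSup hbdd ⟨Φ y, hqZ, rfl⟩
  rw [stdPair_comm (Φ y) y] at hconj
  have hnorm : nrm (Φ y - p) = nrm (p - Φ y) := normOn_sub_symm nrm p (Φ y)
  rw [hnorm]
  unfold fenchelCoupling
  linarith
end
end

section
/- Let ψ be a K-strongly convex regularizer on a compact convex subset Z of a normed Euclidean space (R^D, ‖·‖), with induced mirror map Φ and Fenchel coupling F. Then for every p ∈ Z and all y, y′ ∈ R^D: F(p, y′) ≤ F(p, y) + ⟨Φ(y) − p, y′ − y⟩ + (1/(2K))‖y′ − y‖_*². -/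
/-!
Writing `x = Φ y`, `x' = Φ y'`, the coupling difference `F(p, y') - F(p, y) - ⟨Φ y - p, y' - y⟩`
equals `ψ*(y') - ψ*(y) - ⟨x, y' - y⟩`, so it suffices that `ψ*` is `1/K`-smooth for the dual norm.
Since `x` maximizes the `K`-strongly concave function `⟨y, ·⟩ - ψ`, comparing it with the points
`t x' + (1 - t) x` and letting `t → 0` gives quadratic growth:
`⟨y, x'⟩ - ψ x' + (K/2)‖x' - x‖² ≤ ⟨y, x⟩ - ψ x`. Hence
`ψ*(y') - ψ*(y) - ⟨x, y' - y⟩ ≤ ⟨x' - x, y' - y⟩ - (K/2)‖x' - x‖² ≤ ‖x' - x‖ ‖y' - y‖_* - (K/2)‖x' - x‖²`,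
and Young's inequality bounds the right side by `‖y' - y‖_*² / (2K)`.
-/

open scoped BigOperators

noncomputable section

open Set Filter Topology

lemma stdPair_eq_dotProduct {D : ℕ} (x y : Fin D → ℝ) : stdPair x y = x ⬝ᵥ y := rfl

namespace NormOn

variable {D : ℕ} (nrm : NormOn D)

def toSeminorm : Seminorm ℝ (Fin D → ℝ) :=
  Seminorm.of nrm nrm.add_le' fun c x => by simpa using nrm.smul' c x

lemma nonneg (x : Fin D → ℝ) : 0 ≤ nrm x :=
  apply_nonneg nrm.toSeminorm x

lemma apply_zero : nrm 0 = 0 :=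
  map_zero nrm.toSeminorm

lemma continuous : Continuous nrm :=
  nrm.toSeminorm.convexOn.locallyLipschitz.continuous

lemma exists_pos_mul_norm_le : ∃ c > 0, ∀ x, c * ‖x‖ ≤ nrm x := by
  have hpos : ∀ x ∈ Metric.sphere (0 : Fin D → ℝ) 1, 0 < nrm x := fun x hx =>
    (nrm.nonneg x).lt_of_ne fun h => by simp [nrm.eq_zero' x h.symm] at hx
  obtain ⟨c, hc, hle⟩ :=
    (isCompact_sphere 0 1).exists_forall_le' nrm.continuous.continuousOn hpos
  refine ⟨c, hc, fun x => ?_⟩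
  rcases eq_or_ne x 0 with rfl | hx
  · simpa using nrm.nonneg 0
  have hnx : 0 < ‖x‖ := norm_pos_iff.2 hx
  have := hle (‖x‖⁻¹ • x) (by simp [norm_smul, hnx.ne'])
  rw [nrm.smul', abs_of_pos (inv_pos.2 hnx)] at this
  rwa [le_inv_mul_iff₀ hnx, mul_comm] at this

lemma isCompact_unitBall : IsCompact {x | nrm x ≤ 1} := by
  obtain ⟨c, hc, hle⟩ := nrm.exists_pos_mul_norm_le
  refine Metric.isCompact_of_isClosed_isBounded (isClosed_le nrm.continuous continuous_const)
    ((Metric.isBounded_closedBall (x := 0) (r := c⁻¹)).subset fun x hx => ?_)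
  rw [mem_closedBall_zero_iff, ← mul_one c⁻¹, le_inv_mul_iff₀ hc]
  exact (hle x).trans hx

lemma stdPair_le_mul_dualNorm (v u : Fin D → ℝ) : stdPair v u ≤ nrm v * dualNorm nrm u := by
  have hbdd : BddAbove ((fun x => stdPair x u) '' {x | nrm x ≤ 1}) :=
    nrm.isCompact_unitBall.bddAbove_image (continuous_finsetSum _ fun j _ =>
      (continuous_apply j).mul continuous_const).continuousOn
  rcases (nrm.nonneg v).eq_or_lt with hv | hv
  · simp [nrm.eq_zero' v hv.symm, nrm.apply_zero, stdPair]
  have hunit : (nrm v)⁻¹ • v ∈ {x | nrm x ≤ 1} := by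
    simp [nrm.smul', abs_of_pos (inv_pos.2 hv), hv.ne']
  have : stdPair ((nrm v)⁻¹ • v) u ≤ dualNorm nrm u := le_csSup hbdd ⟨_, hunit, rfl⟩
  rwa [stdPair_eq_dotProduct, smul_dotProduct, smul_eq_mul, inv_mul_le_iff₀ hv] at this

end NormOn

lemma nonpos_of_forall_le_mul {a b : ℝ} (h : ∀ t ∈ Ioc (0 : ℝ) 1, a ≤ t * b) : a ≤ 0 := by
  have hlim : Tendsto (fun t : ℝ => t * b) (𝓝[>] 0) (𝓝 0) :=
    tendsto_nhdsWithin_of_tendsto_nhds ((continuous_mul_const b).tendsto' 0 0 (zero_mul b))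
  exact ge_of_tendsto hlim (mem_of_superset (Ioc_mem_nhdsGT one_pos) h)

section MirrorMap

variable {D : ℕ} {Z : Set (Fin D → ℝ)} {ψ : (Fin D → ℝ) → ℝ}

lemma conjFn_eq_of_forall_le {x y : Fin D → ℝ} (hx : x ∈ Z)
    (hmax : ∀ z ∈ Z, stdPair y z - ψ z ≤ stdPair y x - ψ x) :
    conjFn Z ψ y = stdPair x y - ψ x := by
  refine IsGreatest.csSup_eq ⟨⟨x, hx, rfl⟩, ?_⟩
  rintro _ ⟨z, hz, rfl⟩
  simpa only [stdPair_eq_dotProduct, dotProduct_comm y] using hmax z hz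

lemma add_half_mul_sq_le_of_forall_le (nrm : NormOn D) {K : ℝ} (hZconv : Convex ℝ Z)
    (hψsc : ∀ x ∈ Z, ∀ y ∈ Z, ∀ t ∈ Set.Icc (0 : ℝ) 1,
      ψ (t • x + (1 - t) • y) ≤
        t * ψ x + (1 - t) * ψ y - K / 2 * t * (1 - t) * (nrm (x - y)) ^ 2)
    {x y z : Fin D → ℝ} (hx : x ∈ Z) (hmax : ∀ z ∈ Z, stdPair y z - ψ z ≤ stdPair y x - ψ x)
    (hz : z ∈ Z) :
    stdPair y z - ψ z + K / 2 * nrm (z - x) ^ 2 ≤ stdPair y x - ψ x := by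
  refine sub_nonpos.1 (nonpos_of_forall_le_mul (b := K / 2 * nrm (z - x) ^ 2) fun t ht => ?_)
  have hw : t • z + (1 - t) • x ∈ Z := hZconv hz hx ht.1.le (by linarith [ht.2]) (by ring)
  have hconv := hψsc z hz x hx t (Ioc_subset_Icc_self ht)
  have hopt := hmax _ hw
  simp only [stdPair_eq_dotProduct, dotProduct_add, dotProduct_smul, smul_eq_mul] at hopt ⊢
  nlinarith [ht.1]

lemma conjFn_le_add_dualNorm_sq (nrm : NormOn D) {K : ℝ} (hK : 0 < K) (hZconv : Convex ℝ Z)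
    (hψsc : ∀ x ∈ Z, ∀ y ∈ Z, ∀ t ∈ Set.Icc (0 : ℝ) 1,
      ψ (t • x + (1 - t) • y) ≤
        t * ψ x + (1 - t) * ψ y - K / 2 * t * (1 - t) * (nrm (x - y)) ^ 2)
    {Φ : (Fin D → ℝ) → (Fin D → ℝ)} (hΦmem : ∀ y, Φ y ∈ Z)
    (hΦmax : ∀ y, ∀ x ∈ Z, stdPair y x - ψ x ≤ stdPair y (Φ y) - ψ (Φ y)) (y y' : Fin D → ℝ) :
    conjFn Z ψ y' ≤
      conjFn Z ψ y + stdPair (Φ y) (y' - y) + 1 / (2 * K) * dualNorm nrm (y' - y) ^ 2 := by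
  have hgrowth :=
    add_half_mul_sq_le_of_forall_le nrm hZconv hψsc (hΦmem y) (hΦmax y) (hΦmem y')
  have hdual := nrm.stdPair_le_mul_dualNorm (Φ y' - Φ y) (y' - y)
  have hyoung : nrm (Φ y' - Φ y) * dualNorm nrm (y' - y) ≤
      K / 2 * nrm (Φ y' - Φ y) ^ 2 + 1 / (2 * K) * dualNorm nrm (y' - y) ^ 2 := by
    have := sq_nonneg (K * nrm (Φ y' - Φ y) - dualNorm nrm (y' - y))
    field_simp
    nlinarith
  rw [conjFn_eq_of_forall_le (hΦmem y) (hΦmax y), conjFn_eq_of_forall_le (hΦmem y') (hΦmax y')]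
  simp only [stdPair_eq_dotProduct, sub_dotProduct, dotProduct_sub,
    dotProduct_comm y] at hgrowth hdual ⊢
  linarith

end MirrorMap

theorem fenchel_coupling_upper_bound_general {D : ℕ} (nrm : NormOn D) (Z : Set (Fin D → ℝ))
    (hZconv : Convex ℝ Z)
    (K : ℝ) (hK : 0 < K)
    (ψ : (Fin D → ℝ) → ℝ)
    (hψsc : ∀ x ∈ Z, ∀ y ∈ Z, ∀ t ∈ Set.Icc (0 : ℝ) 1,
      ψ (t • x + (1 - t) • y) ≤
        t * ψ x + (1 - t) * ψ y - K / 2 * t * (1 - t) * (nrm (x - y)) ^ 2)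
    (Φ : (Fin D → ℝ) → (Fin D → ℝ))
    (hΦmem : ∀ y, Φ y ∈ Z)
    (hΦmax : ∀ y, ∀ x ∈ Z, stdPair y x - ψ x ≤ stdPair y (Φ y) - ψ (Φ y)) :
    ∀ p ∈ Z, ∀ y y',
      fenchelCoupling Z ψ p y' ≤
        fenchelCoupling Z ψ p y + stdPair (Φ y - p) (y' - y) +
          1 / (2 * K) * (dualNorm nrm (y' - y)) ^ 2 := by
  intro p _ y y'
  have hsmooth := conjFn_le_add_dualNorm_sq nrm hK hZconv hψsc hΦmem hΦmax y y'
  simp only [fenchelCoupling, stdPair_eq_dotProduct, sub_dotProduct, dotProduct_sub,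
    dotProduct_comm _ p] at hsmooth ⊢
  linarith

/-- **One-step descent inequality for the Fenchel coupling.**
Let `ψ` be a `K`-strongly convex regularizer on a compact convex subset `Z` of the normed
Euclidean space `(ℝ^D, ‖·‖)`, with induced mirror map `Φ` and Fenchel coupling `F`.
Then for every `p ∈ Z` and all `y, y′ ∈ ℝ^D`:
`F(p, y′) ≤ F(p, y) + ⟨Φ(y) − p, y′ − y⟩ + (1/(2K)) ‖y′ − y‖_*²`. -/
theorem fenchel_coupling_upper_bound {D : ℕ} (nrm : NormOn D) (Z : Set (Fin D → ℝ))
    (hZne : Z.Nonempty) (hZcomp : IsCompact Z) (hZconv : Convex ℝ Z)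
    (K : ℝ) (hK : 0 < K)
    (ψ : (Fin D → ℝ) → ℝ) (hψcont : ContinuousOn ψ Z)
    (hψsc : ∀ x ∈ Z, ∀ y ∈ Z, ∀ t ∈ Set.Icc (0 : ℝ) 1,
      ψ (t • x + (1 - t) • y) ≤
        t * ψ x + (1 - t) * ψ y - K / 2 * t * (1 - t) * (nrm (x - y)) ^ 2)
    (Φ : (Fin D → ℝ) → (Fin D → ℝ))
    (hΦmem : ∀ y, Φ y ∈ Z)
    (hΦmax : ∀ y, ∀ x ∈ Z, stdPair y x - ψ x ≤ stdPair y (Φ y) - ψ (Φ y)) :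
    ∀ p ∈ Z, ∀ y y',
      fenchelCoupling Z ψ p y' ≤
        fenchelCoupling Z ψ p y + stdPair (Φ y - p) (y' - y) +
          1 / (2 * K) * (dualNorm nrm (y' - y)) ^ 2 :=
  fenchel_coupling_upper_bound_general nrm Z hZconv K hK ψ hψsc Φ hΦmem hΦmax
end
end

section
/- Under Assumptions 1, 2 and 3 (Slater), for x̄ ∈ Q the following are equivalent: (1) x̄ is a solution of VI(Q, v); (2) there exists λ̄ ∈ R^R_{≥0} such that (x̄, λ̄) is a solution of VI(X × R^R_{≥0}, ṽ), where ṽ(x, λ) = ( v(x) − ∇g(x)^T λ , g(x) ). -/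
open scoped BigOperators
open Filter

noncomputable section

/-- The standard duality pairing on a block `ℝ^d`. -/
def pairB {d : ℕ} (x y : Fin d → ℝ) : ℝ := ∑ j, x j * y j

/-- The Euclidean norm on a block `ℝ^d`. -/
def bnorm {d : ℕ} (x : Fin d → ℝ) : ℝ := Real.sqrt (∑ j, (x j) ^ 2)

/-- The standard duality pairing on the joint space `∏ i, ℝ^{D_i}`. -/
def pairE {N : ℕ} {Dv : Fin N → ℕ} (x y : (i : Fin N) → Fin (Dv i) → ℝ) : ℝ :=
  ∑ i, pairB (x i) (y i)

/-- The Euclidean norm on the joint space `∏ i, ℝ^{D_i}`. -/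
def enormE {N : ℕ} {Dv : Fin N → ℕ} (x : (i : Fin N) → Fin (Dv i) → ℝ) : ℝ :=
  Real.sqrt (∑ i, ∑ j, (x i j) ^ 2)

/-- The Euclidean norm on `ℝ^R`. -/
def rnorm {R : ℕ} (lam : Fin R → ℝ) : ℝ := Real.sqrt (∑ r, (lam r) ^ 2)

/-- The joint strategy set `X = ∏ i, X_i`. -/
def jointSet {N : ℕ} {Dv : Fin N → ℕ} (Xs : (i : Fin N) → Set (Fin (Dv i) → ℝ)) :
    Set ((i : Fin N) → Fin (Dv i) → ℝ) :=
  {x | ∀ i, x i ∈ Xs i}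

/-- The feasible set `Q = X ∩ {x : g(x) ≤ 0}`. -/
def feasSet {N R : ℕ} {Dv : Fin N → ℕ} (Xs : (i : Fin N) → Set (Fin (Dv i) → ℝ))
    (g : ((i : Fin N) → Fin (Dv i) → ℝ) → Fin R → ℝ) :
    Set ((i : Fin N) → Fin (Dv i) → ℝ) :=
  {x | (∀ i, x i ∈ Xs i) ∧ ∀ r, g x r ≤ 0}

/-- `∇g(x)ᵀ λ`, the weighted sum of the gradients `∇g_r(x)` with weights `λ_r`. -/
def gradT {N R : ℕ} {Dv : Fin N → ℕ}
    (Gg : ((i : Fin N) → Fin (Dv i) → ℝ) → Fin R → ((i : Fin N) → Fin (Dv i) → ℝ))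
    (x : (i : Fin N) → Fin (Dv i) → ℝ) (lam : Fin R → ℝ) :
    (i : Fin N) → Fin (Dv i) → ℝ :=
  fun i j => ∑ r, lam r * Gg x r i j

/-- `(x̄, λ̄)` solves the extended variational inequality `VI(X × ℝ^R_{≥0}, ṽ)`, where
`ṽ(x, λ) = (v(x) − ∇g(x)ᵀλ, g(x))`. -/
def extVISol {N R : ℕ} {Dv : Fin N → ℕ} (Xs : (i : Fin N) → Set (Fin (Dv i) → ℝ))
    (v : ((i : Fin N) → Fin (Dv i) → ℝ) → ((i : Fin N) → Fin (Dv i) → ℝ))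
    (g : ((i : Fin N) → Fin (Dv i) → ℝ) → Fin R → ℝ)
    (Gg : ((i : Fin N) → Fin (Dv i) → ℝ) → Fin R → ((i : Fin N) → Fin (Dv i) → ℝ))
    (xbar : (i : Fin N) → Fin (Dv i) → ℝ) (lambar : Fin R → ℝ) : Prop :=
  xbar ∈ jointSet Xs ∧ (∀ r, 0 ≤ lambar r) ∧
    ∀ x ∈ jointSet Xs, ∀ lam : Fin R → ℝ, (∀ r, 0 ≤ lam r) →
      pairE (x - xbar) (v xbar - gradT Gg xbar lambar) +
        (∑ r, (lam r - lambar r) * g xbar r) ≤ 0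

/-- `x̄` solves the variational inequality `VI(Q, v)`. -/
def VISol {N R : ℕ} {Dv : Fin N → ℕ} (Xs : (i : Fin N) → Set (Fin (Dv i) → ℝ))
    (g : ((i : Fin N) → Fin (Dv i) → ℝ) → Fin R → ℝ)
    (v : ((i : Fin N) → Fin (Dv i) → ℝ) → ((i : Fin N) → Fin (Dv i) → ℝ))
    (xbar : (i : Fin N) → Fin (Dv i) → ℝ) : Prop :=
  xbar ∈ feasSet Xs g ∧ ∀ x ∈ feasSet Xs g, pairE (x - xbar) (v xbar) ≤ 0

/-!
(2) ⇒ (1): the `λ`-part of the extended inequality says exactly that `x̄` is feasible and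
`∑ λ̄ᵣ gᵣ(x̄) = 0`; with the gradient inequality `⟨∇gᵣ(x̄), x - x̄⟩ ≤ gᵣ(x) - gᵣ(x̄)` its
`x`-part bounds `⟨x - x̄, v(x̄)⟩` by `∑ λ̄ᵣ gᵣ(x) ≤ 0` on `Q`.

(1) ⇒ (2): `x̄` maximises the linear function `⟨·, v(x̄)⟩` over `Q`. Separating the value
`(⟨x̄, v(x̄)⟩, 0)` from the open convex set of pairs `(s, z)` with `s < ⟨x, v(x̄)⟩` and `g(x) < z`
for some `x ∈ X` gives Fritz John multipliers; Slater's point makes the objective multiplier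
positive, so `x̄` maximises the Lagrangian `⟨x, v(x̄)⟩ - ∑ λᵣ gᵣ(x)` over the convex set `X`, and
the first-order condition for this maximum is the `x`-part of the extended inequality.
-/

open Topology

section Ray

variable {V : Type*} [AddCommGroup V] [Module ℝ V] (F : V →ₗ[ℝ] ℝ) {A : Set V} {c : ℝ} {p w : V}

lemma LinearMap.apply_nonpos_of_forall_add_smul_mem (hF : ∀ q ∈ A, F q < c)
    (hray : ∀ t : ℝ, 0 ≤ t → p + t • w ∈ A) : F w ≤ 0 := by
  have hlt (t : ℝ) (ht : 0 ≤ t) : F p + t * F w < c := by simpa using hF _ (hray t ht)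
  by_contra! hw
  have := hlt ((c - F p) / F w) (div_nonneg (by linarith [hlt 0 le_rfl]) hw.le)
  rw [div_mul_cancel₀ _ hw.ne'] at this
  linarith

lemma LinearMap.le_of_forall_add_smul_mem (hF : ∀ q ∈ A, F q < c)
    (hray : ∀ t : ℝ, 0 < t → p + t • w ∈ A) : F p ≤ c := by
  have hlim : Tendsto (fun t : ℝ => F p + t * F w) (𝓝[>] 0) (𝓝 (F p)) :=
    ((continuous_const.add (continuous_id.mul continuous_const)).tendsto' 0 _ (by simp)).mono_left
      nhdsWithin_le_nhds
  exact le_of_tendsto hlim (eventually_nhdsWithin_of_forall fun t ht => by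
    simpa using (hF _ (hray t ht)).le)

end Ray

lemma combo_lt_combo {a b s₁ s₂ t₁ t₂ : ℝ} (ha : 0 ≤ a) (hb : 0 ≤ b) (hab : a + b = 1)
    (h₁ : s₁ < t₁) (h₂ : s₂ < t₂) : a * s₁ + b * s₂ < a * t₁ + b * t₂ := by
  have := convex_Ioi (0 : ℝ) (sub_pos.2 h₁) (sub_pos.2 h₂) ha hb hab
  simp only [Set.mem_Ioi, smul_eq_mul] at this
  linarith

theorem ContinuousLinearMap.apply_prod_pi {ι : Type*} [Fintype ι] [DecidableEq ι]
    (F : ℝ × (ι → ℝ) →L[ℝ] ℝ) (s : ℝ) (z : ι → ℝ) :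
    F (s, z) = s * F (1, 0) + ∑ r, z r * F (0, Pi.single r 1) := by
  set G : (ι → ℝ) →ₗ[ℝ] ℝ := (F.comp (ContinuousLinearMap.inr ℝ ℝ (ι → ℝ))).toLinearMap
  have hsplit : F (s, z) = F (s • (1, 0)) + G z := by
    rw [← Prod.fst_add_snd (s, z), map_add]; simp [G]
  have hbasis (r : ι) : (fun j => if r = j then (1 : ℝ) else 0) = Pi.single r 1 := by
    ext j; simp [Pi.single_apply, eq_comm]
  rw [hsplit, map_smul, smul_eq_mul, G.pi_apply_eq_sum_univ]
  simp [G, hbasis]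

theorem ConvexOn.apply_sub_le_of_hasFDerivAt {E : Type*} [NormedAddCommGroup E] [NormedSpace ℝ E]
    {S : Set E} {f : E → ℝ} {f' : E →L[ℝ] ℝ} {x y : E} (hf : ConvexOn ℝ S f) (hx : x ∈ S)
    (hy : y ∈ S) (hf' : HasFDerivAt f f' x) : f' (y - x) ≤ f y - f x := by
  have hline : HasDerivAt (f ∘ AffineMap.lineMap x y) (f' (y - x)) (0 : ℝ) :=
    HasFDerivAt.comp_hasDerivAt (0 : ℝ) (by simpa using hf') AffineMap.hasDerivAt_lineMap
  simpa [slope] using (hf.comp_affineMap (AffineMap.lineMap x y)).le_slope_of_hasDerivAt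
    (by simpa using hx) (by simpa using hy) zero_lt_one hline

section ConvexProgram

variable {E ι : Type*}

def valueRegion (S : Set E) (f : E → ℝ) (g : E → ι → ℝ) : Set (ℝ × (ι → ℝ)) :=
  {p | ∃ x ∈ S, p.1 < f x ∧ ∀ r, g x r < p.2 r}

lemma mem_valueRegion_of_le {S : Set E} {f : E → ℝ} {g : E → ι → ℝ} {p q : ℝ × (ι → ℝ)}
    (hp : p ∈ valueRegion S f g) (h₁ : q.1 ≤ p.1) (h₂ : ∀ r, p.2 r ≤ q.2 r) :
    q ∈ valueRegion S f g := by
  obtain ⟨x, hx, hpx, hgx⟩ := hp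
  exact ⟨x, hx, h₁.trans_lt hpx, fun r => (hgx r).trans_le (h₂ r)⟩

lemma isOpen_valueRegion [Finite ι] (S : Set E) (f : E → ℝ) (g : E → ι → ℝ) :
    IsOpen (valueRegion S f g) := by
  have : valueRegion S f g = ⋃ x ∈ S, Set.Iio (f x) ×ˢ Set.univ.pi fun r => Set.Ioi (g x r) := by
    ext p
    simp only [valueRegion, Set.mem_ofPred_eq, Set.mem_iUnion, Set.mem_prod, Set.mem_Iio,
      Set.mem_pi, Set.mem_univ, Set.mem_Ioi, true_implies, exists_prop]
  rw [this]
  exact isOpen_biUnion fun x _ =>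
    isOpen_Iio.prod (isOpen_set_pi Set.finite_univ fun r _ => isOpen_Ioi)

lemma convex_valueRegion [AddCommGroup E] [Module ℝ E] {S : Set E} {f : E → ℝ} {g : E → ι → ℝ}
    (hS : Convex ℝ S) (hf : ConcaveOn ℝ S f) (hg : ∀ r, ConvexOn ℝ S (fun x => g x r)) :
    Convex ℝ (valueRegion S f g) := by
  rintro p ⟨x, hx, hpx, hgx⟩ q ⟨y, hy, hqy, hgy⟩ a b ha hb hab
  refine ⟨a • x + b • y, hS hx hy ha hb hab, ?_, fun r => ?_⟩
  · calc (a • p + b • q).1 = a * p.1 + b * q.1 := by simp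
      _ < a * f x + b * f y := combo_lt_combo ha hb hab hpx hqy
      _ ≤ f (a • x + b • y) := hf.2 hx hy ha hb hab
  · calc g (a • x + b • y) r ≤ a * g x r + b * g y r := (hg r).2 hx hy ha hb hab
      _ < a * p.2 r + b * q.2 r := combo_lt_combo ha hb hab (hgx r) (hgy r)
      _ = (a • p + b • q).2 r := by simp

variable [AddCommGroup E] [Module ℝ E] [Fintype ι] {S : Set E} {f : E → ℝ} {g : E → ι → ℝ}
  {x₀ : E}

theorem exists_fritzJohn_multipliers (hS : Convex ℝ S) (hf : ConcaveOn ℝ S f)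
    (hg : ∀ r, ConvexOn ℝ S (fun x => g x r)) (hx₀ : x₀ ∈ S)
    (hmax : IsMaxOn f {x ∈ S | ∀ r, g x r ≤ 0} x₀) :
    ∃ (a : ℝ) (b : ι → ℝ), 0 ≤ a ∧ (∀ r, 0 ≤ b r) ∧ (a ≠ 0 ∨ b ≠ 0) ∧
      ∀ x ∈ S, a * f x - ∑ r, b r * g x r ≤ a * f x₀ := by
  classical
  have hx₀_notMem : (f x₀, 0) ∉ valueRegion S f g := fun ⟨x, hx, hlt, hgx⟩ =>
    (hmax ⟨hx, fun r => (hgx r).le⟩).not_gt hlt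
  obtain ⟨F, hF⟩ := geometric_hahn_banach_open_point
    (convex_valueRegion hS hf hg) (isOpen_valueRegion S f g) hx₀_notMem
  set p₁ : ℝ × (ι → ℝ) := (f x₀ - 1, fun r => g x₀ r + 1)
  have hp₁ : p₁ ∈ valueRegion S f g := ⟨x₀, hx₀, by simp [p₁], fun r => by simp [p₁]⟩
  -- `valueRegion` is unbounded below in its first coordinate and above in the others, which
  -- fixes the signs of `F`.
  have ha : 0 ≤ F (1, 0) := by
    have := F.toLinearMap.apply_nonpos_of_forall_add_smul_mem (p := p₁) (w := -(1, 0)) hF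
      fun t ht => mem_valueRegion_of_le hp₁ (by simpa using ht) fun r => by simp
    simpa only [ContinuousLinearMap.coe_coe, map_neg, neg_nonpos] using this
  have hb (r : ι) : F (0, Pi.single r 1) ≤ 0 :=
    F.toLinearMap.apply_nonpos_of_forall_add_smul_mem (p := p₁) hF fun t ht =>
      mem_valueRegion_of_le hp₁ (by simp) fun r' => by by_cases h : r' = r <;> simp [h, ht]
  have hbound (x : E) (hx : x ∈ S) : F (f x, g x) ≤ F (f x₀, 0) :=
    F.toLinearMap.le_of_forall_add_smul_mem (w := (-1, 1)) hF fun t ht =>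
      ⟨x, hx, by simpa using ht, fun r => by simpa using ht⟩
  refine ⟨F (1, 0), fun r => -F (0, Pi.single r 1), ha, fun r => neg_nonneg.2 (hb r), ?_,
    fun x hx => ?_⟩
  · by_contra! h
    have hF₀ (p) : F p = 0 := by
      rw [F.apply_prod_pi, h.1, Finset.sum_eq_zero fun r _ => ?_]
      · ring
      · simp [neg_eq_zero.1 (congrFun h.2 r)]
    simpa only [hF₀, lt_self_iff_false] using hF p₁ hp₁
  · have := hbound x hx
    rw [F.apply_prod_pi (f x), F.apply_prod_pi (f x₀)] at this
    simp only [Pi.zero_apply, zero_mul, Finset.sum_const_zero, add_zero] at this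
    simp only [neg_mul, Finset.sum_neg_distrib, sub_neg_eq_add, mul_comm (F _)]
    linarith

theorem exists_lagrangeMultipliers_of_slater (hS : Convex ℝ S) (hf : ConcaveOn ℝ S f)
    (hg : ∀ r, ConvexOn ℝ S (fun x => g x r)) (hx₀ : x₀ ∈ S) (hfeas : ∀ r, g x₀ r ≤ 0)
    (hmax : IsMaxOn f {x ∈ S | ∀ r, g x r ≤ 0} x₀) (hslater : ∃ y ∈ S, ∀ r, g y r < 0) :
    ∃ lam : ι → ℝ, (∀ r, 0 ≤ lam r) ∧ ∑ r, lam r * g x₀ r = 0 ∧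
      IsMaxOn (fun x => f x - ∑ r, lam r * g x r) S x₀ := by
  obtain ⟨a, b, ha_nonneg, hb, hab, hbound⟩ := exists_fritzJohn_multipliers hS hf hg hx₀ hmax
  obtain ⟨y, hy, hgy⟩ := hslater
  -- If `a = 0`, the bound at the Slater point `y` forces every `b r` to vanish.
  have ha : 0 < a := by
    refine ha_nonneg.lt_of_ne' fun ha₀ => hab.elim (· ha₀) fun hb₀ => hb₀ (funext fun r => ?_)
    have hterm (r : ι) : b r * g y r ≤ 0 := mul_nonpos_of_nonneg_of_nonpos (hb r) (hgy r).le
    have hsum : ∑ r, b r * g y r = 0 :=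
      le_antisymm (Finset.sum_nonpos fun r _ => hterm r) (by simpa [ha₀] using hbound y hy)
    exact (mul_eq_zero.1 ((Finset.sum_eq_zero_iff_of_nonpos fun r _ => hterm r).1 hsum r
      (Finset.mem_univ r))).resolve_right (hgy r).ne
  have hlag (x : E) (hx : x ∈ S) : f x - ∑ r, b r / a * g x r ≤ f x₀ := by
    have h := hbound x hx
    simp only [div_mul_eq_mul_div, ← Finset.sum_div]
    rw [sub_le_iff_le_add, ← sub_le_iff_le_add', le_div_iff₀ ha]
    linarith
  have hslack : ∑ r, b r / a * g x₀ r = 0 := by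
    refine le_antisymm (Finset.sum_nonpos fun r _ => ?_) (by linarith [hlag x₀ hx₀])
    exact mul_nonpos_of_nonneg_of_nonpos (div_nonneg (hb r) ha.le) (hfeas r)
  exact ⟨fun r => b r / a, fun r => div_nonneg (hb r) ha.le, hslack,
    fun x hx => by simpa [hslack] using hlag x hx⟩

end ConvexProgram

lemma forall_sum_sub_mul_nonpos_iff {ι : Type*} [Fintype ι] [DecidableEq ι] {μ c : ι → ℝ}
    (hμ : ∀ r, 0 ≤ μ r) :
    (∀ lam : ι → ℝ, (∀ r, 0 ≤ lam r) → ∑ r, (lam r - μ r) * c r ≤ 0) ↔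
      (∀ r, c r ≤ 0) ∧ ∑ r, μ r * c r = 0 := by
  have hsplit (lam : ι → ℝ) : ∑ r, (lam r - μ r) * c r = ∑ r, lam r * c r - ∑ r, μ r * c r := by
    simp only [sub_mul, Finset.sum_sub_distrib]
  simp only [hsplit]
  constructor
  · intro h
    have hc (r : ι) : c r ≤ 0 := by
      have := h (μ + Pi.single r 1) fun r' => add_nonneg (hμ r') (by
        by_cases hr : r' = r <;> simp [hr])
      simpa [add_mul, Finset.sum_add_distrib, Pi.single_apply] using this
    refine ⟨hc, le_antisymm ?_ (by simpa using h 0 fun _ => le_rfl)⟩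
    exact Finset.sum_nonpos fun r _ => mul_nonpos_of_nonneg_of_nonpos (hμ r) (hc r)
  · rintro ⟨hc, hslack⟩ lam hlam
    rw [hslack, sub_zero]
    exact Finset.sum_nonpos fun r _ => mul_nonpos_of_nonneg_of_nonpos (hlam r) (hc r)

section Game

variable {N R : ℕ} {Dv : Fin N → ℕ} {Xs : (i : Fin N) → Set (Fin (Dv i) → ℝ)}
  {v : ((i : Fin N) → Fin (Dv i) → ℝ) → ((i : Fin N) → Fin (Dv i) → ℝ)}
  {g : ((i : Fin N) → Fin (Dv i) → ℝ) → Fin R → ℝ}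
  {Gg : ((i : Fin N) → Fin (Dv i) → ℝ) → Fin R → ((i : Fin N) → Fin (Dv i) → ℝ)}
  {g' : Fin R → ((i : Fin N) → Fin (Dv i) → ℝ) →L[ℝ] ℝ} {xbar : (i : Fin N) → Fin (Dv i) → ℝ}

def pairCLM (y : (i : Fin N) → Fin (Dv i) → ℝ) : ((i : Fin N) → Fin (Dv i) → ℝ) →L[ℝ] ℝ :=
  ∑ i, ∑ j, y i j • (ContinuousLinearMap.proj j).comp
    (ContinuousLinearMap.proj (R := ℝ) (φ := fun i => Fin (Dv i) → ℝ) i)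

lemma pairCLM_apply (x y : (i : Fin N) → Fin (Dv i) → ℝ) : pairCLM y x = pairE x y := by
  simp [pairCLM, pairE, pairB, mul_comm]

lemma pairE_sub_gradT (d y x : (i : Fin N) → Fin (Dv i) → ℝ) (lam : Fin R → ℝ) :
    pairE d (y - gradT Gg x lam) = pairE d y - ∑ r, lam r * pairE (Gg x r) d := by
  simp only [pairE, pairB, gradT, Pi.sub_apply, mul_sub, Finset.sum_sub_distrib, Finset.mul_sum]
  congr 1
  rw [Finset.sum_comm]
  refine Finset.sum_congr rfl fun i _ => ?_
  rw [Finset.sum_comm]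
  exact Finset.sum_congr rfl fun j _ => Finset.sum_congr rfl fun r _ => by ring

lemma convex_jointSet (hXconv : ∀ i, Convex ℝ (Xs i)) : Convex ℝ (jointSet Xs) := by
  have : jointSet Xs = Set.univ.pi Xs := by ext; simp [jointSet]
  exact this ▸ convex_pi fun i _ => hXconv i

lemma extVISol_iff {lam : Fin R → ℝ} :
    extVISol Xs v g Gg xbar lam ↔ xbar ∈ jointSet Xs ∧ (∀ r, 0 ≤ lam r) ∧ (∀ r, g xbar r ≤ 0) ∧
      ∑ r, lam r * g xbar r = 0 ∧
      ∀ x ∈ jointSet Xs, pairE (x - xbar) (v xbar - gradT Gg xbar lam) ≤ 0 := by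
  have hzero (y : (i : Fin N) → Fin (Dv i) → ℝ) : pairE (xbar - xbar) y = 0 := by
    rw [sub_self, ← pairCLM_apply, map_zero]
  constructor
  · rintro ⟨hxX, hlam, h⟩
    have hdual := (forall_sum_sub_mul_nonpos_iff (c := g xbar) hlam).1 fun μ hμ => by
      have := h xbar hxX μ hμ
      rwa [hzero, zero_add] at this
    exact ⟨hxX, hlam, hdual.1, hdual.2, fun x hx => by simpa using h x hx lam hlam⟩
  · rintro ⟨hxX, hlam, hfeas, hslack, hVI⟩
    exact ⟨hxX, hlam, fun x hx μ hμ => add_nonpos (hVI x hx)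
      ((forall_sum_sub_mul_nonpos_iff hlam).2 ⟨hfeas, hslack⟩ μ hμ)⟩

theorem exists_extVISol_of_viSol (hXconv : ∀ i, Convex ℝ (Xs i))
    (hgconv : ∀ r, ConvexOn ℝ (jointSet Xs) (fun x => g x r))
    (hg' : ∀ r, HasFDerivAt (fun z => g z r) (g' r) xbar)
    (hg'_apply : ∀ r w, g' r w = pairE (Gg xbar r) w)
    (hSlater : ∃ x ∈ jointSet Xs, ∀ r, g x r < 0) (h : VISol Xs g v xbar) :
    ∃ lam : Fin R → ℝ, extVISol Xs v g Gg xbar lam := by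
  obtain ⟨⟨hxX, hfeas⟩, hVI⟩ := h
  have hX := convex_jointSet hXconv
  have hmax : IsMaxOn (pairCLM (v xbar)) {x ∈ jointSet Xs | ∀ r, g x r ≤ 0} xbar :=
    fun x hx => by
      have := hVI x hx
      rwa [← pairCLM_apply, map_sub, sub_nonpos] at this
  obtain ⟨lam, hlam, hslack, hlag⟩ := exists_lagrangeMultipliers_of_slater hX
    ((pairCLM (v xbar)).toLinearMap.concaveOn hX) hgconv hxX hfeas hmax hSlater
  refine ⟨lam, extVISol_iff.2 ⟨hxX, hlam, hfeas, hslack, fun x hx => ?_⟩⟩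
  have hderiv : HasFDerivAt (fun x => pairCLM (v xbar) x - ∑ r, lam r * g x r)
      (pairCLM (v xbar) - ∑ r, lam r • g' r) xbar :=
    (pairCLM _).hasFDerivAt.sub (HasFDerivAt.fun_sum fun r _ => (hg' r).const_mul (lam r))
  have := hlag.localize.hasFDerivWithinAt_nonpos hderiv.hasFDerivWithinAt
    (sub_mem_posTangentConeAt_of_segment_subset (hX.segment_subset hxX hx))
  simpa [pairE_sub_gradT, pairCLM_apply, hg'_apply] using this

theorem viSol_of_extVISol (hgconv : ∀ r, ConvexOn ℝ (jointSet Xs) (fun x => g x r))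
    (hg' : ∀ r, HasFDerivAt (fun z => g z r) (g' r) xbar)
    (hg'_apply : ∀ r w, g' r w = pairE (Gg xbar r) w) {lam : Fin R → ℝ}
    (h : extVISol Xs v g Gg xbar lam) : VISol Xs g v xbar := by
  obtain ⟨hxX, hlam, hfeas, hslack, hVI⟩ := extVISol_iff.1 h
  refine ⟨⟨hxX, hfeas⟩, fun x hx => ?_⟩
  have hgrad (r : Fin R) : pairE (Gg xbar r) (x - xbar) ≤ g x r - g xbar r :=
    hg'_apply r _ ▸ (hgconv r).apply_sub_le_of_hasFDerivAt hxX hx.1 (hg' r)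
  calc pairE (x - xbar) (v xbar) ≤ ∑ r, lam r * pairE (Gg xbar r) (x - xbar) := by
        have := hVI x hx.1
        rw [pairE_sub_gradT] at this
        linarith
    _ ≤ ∑ r, lam r * (g x r - g xbar r) :=
        Finset.sum_le_sum fun r _ => mul_le_mul_of_nonneg_left (hgrad r) (hlam r)
    _ = ∑ r, lam r * g x r := by simp only [mul_sub, Finset.sum_sub_distrib, hslack, sub_zero]
    _ ≤ 0 := Finset.sum_nonpos fun r _ => mul_nonpos_of_nonneg_of_nonpos (hlam r) (hx.2 r)

end Game

theorem vi_kkt_equivalence_general {N R : ℕ} {Dv : Fin N → ℕ}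
    (Xs : (i : Fin N) → Set (Fin (Dv i) → ℝ))
    (hXconv : ∀ i, Convex ℝ (Xs i))
    (v : ((i : Fin N) → Fin (Dv i) → ℝ) → ((i : Fin N) → Fin (Dv i) → ℝ))
    -- Assumption 2
    (g : ((i : Fin N) → Fin (Dv i) → ℝ) → Fin R → ℝ)
    (Gg : ((i : Fin N) → Fin (Dv i) → ℝ) → Fin R → ((i : Fin N) → Fin (Dv i) → ℝ))
    (hgconv : ∀ r, ConvexOn ℝ (jointSet Xs) (fun x => g x r))
    (hgdiff : ∀ (x : (i : Fin N) → Fin (Dv i) → ℝ) (r : Fin R),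
      ∃ L : ((i : Fin N) → Fin (Dv i) → ℝ) →L[ℝ] ℝ,
        HasFDerivAt (fun z => g z r) L x ∧ ∀ w, L w = pairE (Gg x r) w)
    -- Assumption 3 (Slater)
    (hSlater : ∃ x ∈ intrinsicInterior ℝ (jointSet Xs), ∀ r, g x r < 0)
    (xbar : (i : Fin N) → Fin (Dv i) → ℝ) :
    VISol Xs g v xbar ↔ ∃ lambar : Fin R → ℝ, extVISol Xs v g Gg xbar lambar := by
  choose g' hg' hg'_apply using hgdiff xbar
  obtain ⟨y, hy, hgy⟩ := hSlater
  exact ⟨exists_extVISol_of_viSol hXconv hgconv hg' hg'_apply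
      ⟨y, intrinsicInterior_subset hy, hgy⟩,
    fun ⟨_, h⟩ => viSol_of_extVISol hgconv hg' hg'_apply h⟩

/-- **Decoupling via the Lagrangian: `VI(Q,v)` vs. the extended `VI`.**
Under Assumptions 1, 2 and Slater's condition, for `x̄ ∈ Q` the following are equivalent:
(1) `x̄` solves `VI(Q, v)`;
(2) there is `λ̄ ∈ ℝ^R_{≥0}` such that `(x̄, λ̄)` solves `VI(X × ℝ^R_{≥0}, ṽ)`, where
`ṽ(x, λ) = (v(x) − ∇g(x)ᵀλ, g(x))`. -/
theorem vi_kkt_equivalence {N R : ℕ} {Dv : Fin N → ℕ}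
    (Xs : (i : Fin N) → Set (Fin (Dv i) → ℝ))
    (hXne : ∀ i, (Xs i).Nonempty) (hXcomp : ∀ i, IsCompact (Xs i))
    (hXconv : ∀ i, Convex ℝ (Xs i))
    (u : Fin N → ((i : Fin N) → Fin (Dv i) → ℝ) → ℝ)
    (v : ((i : Fin N) → Fin (Dv i) → ℝ) → ((i : Fin N) → Fin (Dv i) → ℝ))
    -- Assumption 1
    (hconc : ∀ (i : Fin N) (x : (i : Fin N) → Fin (Dv i) → ℝ),
      ConcaveOn ℝ (Xs i) (fun xi => u i (Function.update x i xi)))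
    (hgrad : ∀ (i : Fin N) (x : (i : Fin N) → Fin (Dv i) → ℝ),
      ∃ L : (Fin (Dv i) → ℝ) →L[ℝ] ℝ,
        HasFDerivAt (fun xi => u i (Function.update x i xi)) L (x i) ∧
        ∀ w, L w = pairB (v x i) w)
    (hvcont : ContinuousOn v (jointSet Xs))
    -- Assumption 2
    (g : ((i : Fin N) → Fin (Dv i) → ℝ) → Fin R → ℝ)
    (Gg : ((i : Fin N) → Fin (Dv i) → ℝ) → Fin R → ((i : Fin N) → Fin (Dv i) → ℝ))
    (hgconv : ∀ r, ConvexOn ℝ (jointSet Xs) (fun x => g x r))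
    (hgdiff : ∀ (x : (i : Fin N) → Fin (Dv i) → ℝ) (r : Fin R),
      ∃ L : ((i : Fin N) → Fin (Dv i) → ℝ) →L[ℝ] ℝ,
        HasFDerivAt (fun z => g z r) L x ∧ ∀ w, L w = pairE (Gg x r) w)
    (hGgcont : Continuous Gg)
    (hQne : (feasSet Xs g).Nonempty)
    -- Assumption 3 (Slater)
    (hSlater : ∃ x ∈ intrinsicInterior ℝ (jointSet Xs), ∀ r, g x r < 0)
    (xbar : (i : Fin N) → Fin (Dv i) → ℝ) (hxbar : xbar ∈ feasSet Xs g) :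
    VISol Xs g v xbar ↔ ∃ lambar : Fin R → ℝ, extVISol Xs v g Gg xbar lambar :=
  vi_kkt_equivalence_general Xs hXconv v g Gg hgconv hgdiff hSlater xbar
end
end

section
/- Consider the MAARP iterates (X_n, Y_n, Λ_n) under Assumptions 1 and 2, and suppose each augmentation function θ_n : R^R → R is continuously differentiable and K_n-strongly convex. For z = (x, λ) ∈ X × R^R_{≥0} define V_n(z) = F̃(z, Z_n) − F̃(z, Z_0), η_k(z) = ⟨Z_k − z, ṽ(Z_k)⟩, S_n(x) = Σ_{k=0}^{n−1} γ_k ⟨X_k − x, M_{k+1}⟩, R_n = Σ_{k=0}^{n−1} γ_k² ‖M_{k+1}‖_*², and Ψ_k(Λ_k, λ) = θ_k(λ) − (K_k/2)‖Λ_k − λ‖₂² + [ γ_k( ‖∇θ_k(Λ_k)‖₂² + (C₁²/K)‖Λ_k‖₂² ) − θ_k(Λ_k) ]. Then pathwise, for every n ∈ N and every z = (x, λ) ∈ X × R^R_{≥0}: V_n(z) ≤ Σ_{k=0}^{n−1} γ_k η_k(z) + 2( C₂²/K + C₃²/2 ) Σ_{k=0}^{n−1} γ_k² + Σ_{k=0}^{n−1}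 γ_k Ψ_k(Λ_k, λ) + S_n(x) + (2/K) R_n. -/
open scoped BigOperators
open Filter

noncomputable section

/-- The convex conjugate `ψ*(y) = max_{x ∈ Z}(⟨x,y⟩ − ψ(x))` of a regularizer on a block. -/
def conjB {d : ℕ} (Z : Set (Fin d → ℝ)) (ψ : (Fin d → ℝ) → ℝ) (y : Fin d → ℝ) : ℝ :=
  sSup ((fun x => pairB x y - ψ x) '' Z)

/-- The Fenchel coupling `F(p, y) = ψ(p) + ψ*(y) − ⟨y, p⟩` on a block. -/
def fenchelB {d : ℕ} (Z : Set (Fin d → ℝ)) (ψ : (Fin d → ℝ) → ℝ) (p y : Fin d → ℝ) : ℝ :=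
  ψ p + conjB Z ψ y - pairB y p

/-- The total Fenchel coupling `F(x, y) = Σ_i F_i(x⁽ⁱ⁾, y⁽ⁱ⁾)`. -/
def fenchelTot {N : ℕ} {Dv : Fin N → ℕ} (Xs : (i : Fin N) → Set (Fin (Dv i) → ℝ))
    (ψ : (i : Fin N) → (Fin (Dv i) → ℝ) → ℝ)
    (x y : (i : Fin N) → Fin (Dv i) → ℝ) : ℝ :=
  ∑ i, fenchelB (Xs i) (ψ i) (x i) (y i)

lemma sq_bnorm {d : ℕ} (x : Fin d → ℝ) : (bnorm x) ^ 2 = ∑ j, (x j) ^ 2 :=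
  Real.sq_sqrt (Finset.sum_nonneg fun _ _ => sq_nonneg _)

lemma bnorm_nonneg {d : ℕ} (x : Fin d → ℝ) : 0 ≤ bnorm x := Real.sqrt_nonneg _

lemma pairB_comm {d : ℕ} (x y : Fin d → ℝ) : pairB x y = pairB y x := by
  simp [pairB, mul_comm]

lemma pairB_sub_left {d : ℕ} (a b c : Fin d → ℝ) :
    pairB (a - b) c = pairB a c - pairB b c := by
  simp [pairB, sub_mul, Finset.sum_sub_distrib]

lemma pairB_sub_right {d : ℕ} (a b c : Fin d → ℝ) :
    pairB a (b - c) = pairB a b - pairB a c := by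
  simp [pairB, mul_sub, Finset.sum_sub_distrib]

lemma pairB_le {d : ℕ} (x y : Fin d → ℝ) : pairB x y ≤ bnorm x * bnorm y := by
  have h := Finset.sum_mul_sq_le_sq_mul_sq Finset.univ x y
  have h2 : pairB x y ≤ Real.sqrt ((∑ j, x j ^ 2) * ∑ j, y j ^ 2) := by
    calc pairB x y ≤ |pairB x y| := le_abs_self _
    _ = Real.sqrt ((pairB x y) ^ 2) := (Real.sqrt_sq_eq_abs _).symm
    _ ≤ _ := Real.sqrt_le_sqrt h
  calc pairB x y ≤ _ := h2
  _ = bnorm x * bnorm y := Real.sqrt_mul (Finset.sum_nonneg fun _ _ => sq_nonneg _) _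

lemma pairB_convex {d : ℕ} (y q p : Fin d → ℝ) (t : ℝ) :
    pairB y (t • q + (1 - t) • p) = t * pairB y q + (1 - t) * pairB y p := by
  simp only [pairB, Pi.add_apply, Pi.smul_apply, smul_eq_mul, Finset.mul_sum,
    ← Finset.sum_add_distrib]
  exact Finset.sum_congr rfl fun j _ => by ring

/-- Quadratic growth away from the maximizer of a strongly concave function. -/
lemma max_strong {d : ℕ} {Z : Set (Fin d → ℝ)} (hZ : Convex ℝ Z)
    {K : ℝ} (hK : 0 < K) {ψ : (Fin d → ℝ) → ℝ}
    (hsc : ∀ x ∈ Z, ∀ y ∈ Z, ∀ t ∈ Set.Icc (0:ℝ) 1,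
      ψ (t • x + (1 - t) • y) ≤ t * ψ x + (1 - t) * ψ y - K / 2 * t * (1 - t) * (bnorm (x - y)) ^ 2)
    {y p q : Fin d → ℝ} (hp : p ∈ Z) (hq : q ∈ Z)
    (hmax : ∀ x ∈ Z, pairB y x - ψ x ≤ pairB y p - ψ p) :
    pairB y q - ψ q ≤ pairB y p - ψ p - K / 2 * (bnorm (q - p)) ^ 2 := by
  obtain ⟨s, hs⟩ : ∃ s, (bnorm (q - p)) ^ 2 = s := ⟨_, rfl⟩
  have hs0 : 0 ≤ s := hs ▸ sq_nonneg _
  rw [hs]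
  by_contra hcon
  push_neg at hcon
  obtain ⟨c, hcdef⟩ : ∃ c, (pairB y q - ψ q) - (pairB y p - ψ p) + K / 2 * s = c := ⟨_, rfl⟩
  have hc : 0 < c := by rw [← hcdef]; linarith
  have hspos : 0 < s := by
    rcases lt_or_eq_of_le hs0 with h | h
    · exact h
    · exfalso; have h2 := hmax q hq; rw [← h] at hcdef
      have : c ≤ 0 := by rw [← hcdef]; linarith
      linarith
  have htpos : (0:ℝ) < min 1 (c / (K * s)) := lt_min one_pos (div_pos hc (mul_pos hK hspos))
  obtain ⟨t, htdef⟩ : ∃ t, min 1 (c / (K * s)) = t := ⟨_, rfl⟩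
  rw [htdef] at htpos
  have ht1 : t ≤ 1 := htdef ▸ min_le_left _ _
  have htr : t ≤ c / (K * s) := htdef ▸ min_le_right _ _
  have hmem : t • q + (1 - t) • p ∈ Z :=
    hZ hq hp (le_of_lt htpos) (by linarith) (by ring)
  have h1 := hsc q hq p hp t ⟨le_of_lt htpos, ht1⟩
  rw [hs] at h1
  have h2 := hmax _ hmem
  rw [pairB_convex] at h2
  have key : t * ((pairB y q - ψ q) - (pairB y p - ψ p)) + K / 2 * t * (1 - t) * s ≤ 0 := by
    nlinarith [h1, h2]
  have key2 : (pairB y q - ψ q) - (pairB y p - ψ p) + K / 2 * (1 - t) * s ≤ 0 := by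
    have hmul := mul_le_mul_of_nonneg_left key (le_of_lt (inv_pos.2 htpos))
    have ht' : t⁻¹ * t = 1 := inv_mul_cancel₀ (ne_of_gt htpos)
    nlinarith [hmul]
  have hts : t * s ≤ c / K := by
    calc t * s ≤ (c / (K * s)) * s := by nlinarith
    _ = c / K := by field_simp
  have hfin : c ≤ K / 2 * (t * s) := by rw [← hcdef]; nlinarith [key2]
  have h5 : K / 2 * (t * s) ≤ K / 2 * (c / K) :=
    mul_le_mul_of_nonneg_left hts (by linarith)
  have h6 : K / 2 * (c / K) = c / 2 := by field_simp
  linarith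

lemma conjB_eq {d : ℕ} {Z : Set (Fin d → ℝ)} {ψ : (Fin d → ℝ) → ℝ}
    {Φ : (Fin d → ℝ) → (Fin d → ℝ)} (hΦmem : ∀ y, Φ y ∈ Z)
    (hΦmax : ∀ y, ∀ x ∈ Z, pairB y x - ψ x ≤ pairB y (Φ y) - ψ (Φ y))
    (y : Fin d → ℝ) : conjB Z ψ y = pairB (Φ y) y - ψ (Φ y) := by
  apply IsGreatest.csSup_eq
  constructor
  · exact ⟨Φ y, hΦmem y, rfl⟩
  · rintro z ⟨x, hx, rfl⟩
    have := hΦmax y x hx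
    rw [pairB_comm y x, pairB_comm y (Φ y)] at this
    exact this

/-- One-step Fenchel coupling inequality. -/
lemma fenchelB_step {d : ℕ} {Z : Set (Fin d → ℝ)} (hZ : Convex ℝ Z)
    {K : ℝ} (hK : 0 < K) {ψ : (Fin d → ℝ) → ℝ}
    (hsc : ∀ x ∈ Z, ∀ y ∈ Z, ∀ t ∈ Set.Icc (0:ℝ) 1,
      ψ (t • x + (1 - t) • y) ≤ t * ψ x + (1 - t) * ψ y - K / 2 * t * (1 - t) * (bnorm (x - y)) ^ 2)
    {Φ : (Fin d → ℝ) → (Fin d → ℝ)} (hΦmem : ∀ y, Φ y ∈ Z)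
    (hΦmax : ∀ y, ∀ x ∈ Z, pairB y x - ψ x ≤ pairB y (Φ y) - ψ (Φ y))
    (x : Fin d → ℝ) (y y' : Fin d → ℝ) :
    fenchelB Z ψ x y' ≤ fenchelB Z ψ x y + pairB (y' - y) (Φ y - x) +
      1 / (2 * K) * (bnorm (y' - y)) ^ 2 := by
  have hkey := max_strong hZ hK hsc (hΦmem y) (hΦmem y') (hΦmax y)
  -- pairB y (Φ y') - ψ (Φ y') ≤ pairB y (Φ y) - ψ (Φ y) - K/2 ‖Φy' - Φy‖²
  have hconj : conjB Z ψ y' - conjB Z ψ y ≤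
      pairB (y' - y) (Φ y) + 1 / (2 * K) * (bnorm (y' - y)) ^ 2 := by
    rw [conjB_eq hΦmem hΦmax, conjB_eq hΦmem hΦmax]
    have e1 : pairB (Φ y') y' - ψ (Φ y') - (pairB (Φ y) y - ψ (Φ y)) =
        pairB (Φ y') (y' - y) + ((pairB y (Φ y') - ψ (Φ y')) - (pairB y (Φ y) - ψ (Φ y))) := by
      rw [pairB_sub_right, pairB_comm y (Φ y'), pairB_comm y (Φ y)]; ring
    rw [e1]
    have e2 : pairB (Φ y') (y' - y) =
        pairB (Φ y) (y' - y) + pairB (Φ y' - Φ y) (y' - y) := by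
      rw [pairB_sub_left]; ring
    have hCS : pairB (Φ y' - Φ y) (y' - y) ≤ bnorm (Φ y' - Φ y) * bnorm (y' - y) := pairB_le _ _
    have hAM : bnorm (Φ y' - Φ y) * bnorm (y' - y) ≤
        K / 2 * (bnorm (Φ y' - Φ y)) ^ 2 + 1 / (2 * K) * (bnorm (y' - y)) ^ 2 := by
      have hKne : K ≠ 0 := ne_of_gt hK
      have h1 : (0:ℝ) ≤ (K * bnorm (Φ y' - Φ y) - bnorm (y' - y)) ^ 2 / (2 * K) := by positivity
      have h2 : (K * bnorm (Φ y' - Φ y) - bnorm (y' - y)) ^ 2 / (2 * K) =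
          K / 2 * (bnorm (Φ y' - Φ y)) ^ 2 + 1 / (2 * K) * (bnorm (y' - y)) ^ 2
            - bnorm (Φ y' - Φ y) * bnorm (y' - y) := by
        field_simp
        ring
      linarith [h1, h2]
    have hpb : pairB (y' - y) (Φ y) = pairB (Φ y) (y' - y) := pairB_comm _ _
    rw [hpb]
    linarith [hkey, hCS, hAM]
  have e3 : fenchelB Z ψ x y' - fenchelB Z ψ x y =
      conjB Z ψ y' - conjB Z ψ y - pairB (y' - y) x := by
    unfold fenchelB
    rw [show pairB y' x = pairB (y' - y) x + pairB y x by rw [pairB_sub_left]; ring]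
    ring
  have e4 : pairB (y' - y) (Φ y - x) = pairB (y' - y) (Φ y) - pairB (y' - y) x :=
    pairB_sub_right _ _ _
  linarith [hconj]

lemma sq_rnorm {R : ℕ} (x : Fin R → ℝ) : (rnorm x) ^ 2 = ∑ r, (x r) ^ 2 :=
  Real.sq_sqrt (Finset.sum_nonneg fun _ _ => sq_nonneg _)

lemma rnorm_nonneg {R : ℕ} (x : Fin R → ℝ) : 0 ≤ rnorm x := Real.sqrt_nonneg _

/-- Gradient inequality for a strongly convex differentiable function. -/
lemma sc_grad {R : ℕ} {θ : (Fin R → ℝ) → ℝ} {G : Fin R → ℝ} {Kθ : ℝ}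
    {L : (Fin R → ℝ) →L[ℝ] ℝ} {Λ : Fin R → ℝ}
    (hdiff : HasFDerivAt θ L Λ) (hL : ∀ w, L w = ∑ r, G r * w r)
    (hsc : ∀ x y : Fin R → ℝ, ∀ t ∈ Set.Icc (0:ℝ) 1,
      θ (t • x + (1 - t) • y) ≤ t * θ x + (1 - t) * θ y - Kθ / 2 * t * (1 - t) * (rnorm (x - y)) ^ 2)
    (lam : Fin R → ℝ) :
    (∑ r, G r * (lam r - Λ r)) ≤ θ lam - θ Λ - Kθ / 2 * (rnorm (lam - Λ)) ^ 2 := by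
  set w : Fin R → ℝ := lam - Λ with hw
  have hline : HasDerivAt (fun t : ℝ => Λ + t • w) w 0 := by
    simpa using ((hasDerivAt_id (0:ℝ)).smul_const w).const_add Λ
  have hdiff' : HasFDerivAt θ L (Λ + (0:ℝ) • w) := by simpa using hdiff
  have hφ : HasDerivAt (fun t : ℝ => θ (Λ + t • w)) (L w) 0 :=
    hdiff'.comp_hasDerivAt 0 hline
  have hslope : Tendsto (slope (fun t : ℝ => θ (Λ + t • w)) 0) (nhdsWithin 0 (Set.Ioi 0))
      (nhds (L w)) :=
    (hasDerivAt_iff_tendsto_slope.mp hφ).mono_left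
      (nhdsWithin_mono 0 (fun t ht => ne_of_gt ht))
  have hbound : ∀ᶠ t in nhdsWithin (0:ℝ) (Set.Ioi 0),
      slope (fun t : ℝ => θ (Λ + t • w)) 0 t ≤
        θ lam - θ Λ - Kθ / 2 * (1 - t) * (rnorm (lam - Λ)) ^ 2 := by
    filter_upwards [Ioc_mem_nhdsGT_of_mem (Set.mem_Ico.2 ⟨le_refl 0, one_pos⟩)] with t ht
    obtain ⟨ht0, ht1⟩ := ht
    have hconv := hsc lam Λ t ⟨le_of_lt ht0, ht1⟩
    have hpt : t • lam + (1 - t) • Λ = Λ + t • w := by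
      funext r; simp [hw, Pi.sub_apply]; ring
    rw [hpt] at hconv
    have hsl : slope (fun t : ℝ => θ (Λ + t • w)) 0 t = (θ (Λ + t • w) - θ Λ) / t := by
      rw [slope_def_field]
      norm_num
    rw [hsl, div_le_iff₀ ht0]
    nlinarith [hconv]
  have hcont : Continuous (fun t : ℝ => θ lam - θ Λ - Kθ / 2 * (1 - t) * (rnorm (lam - Λ)) ^ 2) := by
    continuity
  have hlim := (hcont.tendsto 0).mono_left (nhdsWithin_le_nhds (s := Set.Ioi (0:ℝ)))
  have hfin := le_of_tendsto_of_tendsto hslope hlim hbound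
  calc (∑ r, G r * (lam r - Λ r)) = L w := (hL w).symm
  _ ≤ θ lam - θ Λ - Kθ / 2 * (1 - 0) * (rnorm (lam - Λ)) ^ 2 := hfin
  _ = _ := by ring


lemma sq_enormE {N : ℕ} {Dv : Fin N → ℕ} (x : (i : Fin N) → Fin (Dv i) → ℝ) :
    (enormE x) ^ 2 = ∑ i, ∑ j, (x i j) ^ 2 :=
  Real.sq_sqrt (Finset.sum_nonneg fun _ _ => Finset.sum_nonneg fun _ _ => sq_nonneg _)

lemma enormE_nonneg {N : ℕ} {Dv : Fin N → ℕ} (x : (i : Fin N) → Fin (Dv i) → ℝ) :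
    0 ≤ enormE x := Real.sqrt_nonneg _


set_option maxHeartbeats 2000000 in
/-- **Pathwise bound for the primal-dual Fenchel distance along MAARP.**
Under Assumptions 1 and 2, with continuously differentiable `K_n`-strongly convex
augmentation functions `θ_n`, one has for every `n` and every
`z = (x, λ) ∈ X × ℝ^R_{≥0}`:
`V_n(z) ≤ Σ_{k<n} γ_k η_k(z) + 2(C₂²/K + C₃²/2) Σ_{k<n} γ_k²`
`          + Σ_{k<n} γ_k Ψ_k(Λ_k, λ) + S_n(x) + (2/K) R_n`. -/
theorem maarp_fenchel_distance_bound {N R : ℕ} {Dv : Fin N → ℕ}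
    (Xs : (i : Fin N) → Set (Fin (Dv i) → ℝ))
    (hXne : ∀ i, (Xs i).Nonempty) (hXcomp : ∀ i, IsCompact (Xs i))
    (hXconv : ∀ i, Convex ℝ (Xs i))
    (u : Fin N → ((i : Fin N) → Fin (Dv i) → ℝ) → ℝ)
    (v : ((i : Fin N) → Fin (Dv i) → ℝ) → ((i : Fin N) → Fin (Dv i) → ℝ))
    -- Assumption 1
    (hconc : ∀ (i : Fin N) (x : (i : Fin N) → Fin (Dv i) → ℝ),
      ConcaveOn ℝ (Xs i) (fun xi => u i (Function.update x i xi)))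
    (hgrad : ∀ (i : Fin N) (x : (i : Fin N) → Fin (Dv i) → ℝ),
      ∃ L : (Fin (Dv i) → ℝ) →L[ℝ] ℝ,
        HasFDerivAt (fun xi => u i (Function.update x i xi)) L (x i) ∧
        ∀ w, L w = pairB (v x i) w)
    (hvcont : ContinuousOn v (jointSet Xs))
    -- Assumption 2
    (g : ((i : Fin N) → Fin (Dv i) → ℝ) → Fin R → ℝ)
    (Gg : ((i : Fin N) → Fin (Dv i) → ℝ) → Fin R → ((i : Fin N) → Fin (Dv i) → ℝ))
    (hgconv : ∀ r, ConvexOn ℝ (jointSet Xs) (fun x => g x r))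
    (hgdiff : ∀ (x : (i : Fin N) → Fin (Dv i) → ℝ) (r : Fin R),
      ∃ L : ((i : Fin N) → Fin (Dv i) → ℝ) →L[ℝ] ℝ,
        HasFDerivAt (fun z => g z r) L x ∧ ∀ w, L w = pairE (Gg x r) w)
    (hGgcont : Continuous Gg)
    (hQne : (feasSet Xs g).Nonempty)
    -- regularizers and mirror maps
    (K : ℝ) (hK : 0 < K)
    (ψ : (i : Fin N) → (Fin (Dv i) → ℝ) → ℝ)
    (hψcont : ∀ i, ContinuousOn (ψ i) (Xs i))
    (hψsc : ∀ i, ∀ x ∈ Xs i, ∀ y ∈ Xs i, ∀ t ∈ Set.Icc (0 : ℝ) 1,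
      ψ i (t • x + (1 - t) • y) ≤
        t * ψ i x + (1 - t) * ψ i y - K / 2 * t * (1 - t) * (bnorm (x - y)) ^ 2)
    (Φ : (i : Fin N) → (Fin (Dv i) → ℝ) → (Fin (Dv i) → ℝ))
    (hΦmem : ∀ i y, Φ i y ∈ Xs i)
    (hΦmax : ∀ i y, ∀ x ∈ Xs i, pairB y x - ψ i x ≤ pairB y (Φ i y) - ψ i (Φ i y))
    -- the constants C₁, C₂, C₃
    (C₁ C₂ C₃ : ℝ) (hC₁pos : 0 < C₁) (hC₂pos : 0 < C₂) (hC₃pos : 0 < C₃)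
    (hC₁ : ∀ x ∈ jointSet Xs, ∀ lam : Fin R → ℝ, (∀ r, 0 ≤ lam r) →
      enormE (gradT Gg x lam) ≤ C₁ * rnorm lam)
    (hC₂ : ∀ x ∈ jointSet Xs, enormE (v x) ≤ C₂)
    (hC₃ : ∀ x ∈ jointSet Xs, rnorm (g x) ≤ C₃)
    -- augmentation functions: continuously differentiable and `Kθ n`-strongly convex
    (θ : ℕ → (Fin R → ℝ) → ℝ) (Gθ : ℕ → (Fin R → ℝ) → (Fin R → ℝ)) (Kθ : ℕ → ℝ)
    (hθdiff : ∀ n (lam : Fin R → ℝ), ∃ L : (Fin R → ℝ) →L[ℝ] ℝ,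
      HasFDerivAt (θ n) L lam ∧ ∀ w, L w = ∑ r, Gθ n lam r * w r)
    (hθC1 : ∀ n, Continuous (Gθ n))
    (hθsc : ∀ n, ∀ x y : Fin R → ℝ, ∀ t ∈ Set.Icc (0 : ℝ) 1,
      θ n (t • x + (1 - t) • y) ≤
        t * θ n x + (1 - t) * θ n y - Kθ n / 2 * t * (1 - t) * (rnorm (x - y)) ^ 2)
    -- step sizes
    (γ : ℕ → ℝ) (hγpos : ∀ n, 0 < γ n)
    -- the (pathwise) MAARP iterates, with noise values `M_{k+1}`
    (M : ℕ → (i : Fin N) → Fin (Dv i) → ℝ)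
    (X Y : ℕ → (i : Fin N) → Fin (Dv i) → ℝ) (Λ : ℕ → Fin R → ℝ)
    (hX : ∀ n i, X n i = Φ i (Y n i))
    (hY : ∀ n, Y (n + 1) = fun i j =>
      Y n i j + γ n * (v (X n) i j + M (n + 1) i j - gradT Gg (X n) (Λ n) i j))
    (hΛ0 : ∀ r, 0 ≤ Λ 0 r)
    (hΛ : ∀ n r, Λ (n + 1) r = max 0 (Λ n r + γ n * (g (X n) r - Gθ n (Λ n) r))) :
    ∀ (n : ℕ), ∀ x ∈ jointSet Xs, ∀ lam : Fin R → ℝ, (∀ r, 0 ≤ lam r) →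
      (fenchelTot Xs ψ x (Y n) + (rnorm (lam - Λ n)) ^ 2 / 2) -
          (fenchelTot Xs ψ x (Y 0) + (rnorm (lam - Λ 0)) ^ 2 / 2) ≤
        (∑ k ∈ Finset.range n, γ k *
            (pairE (X k - x) (v (X k) - gradT Gg (X k) (Λ k)) +
              ∑ r, (Λ k r - lam r) * g (X k) r)) +
          2 * (C₂ ^ 2 / K + C₃ ^ 2 / 2) * (∑ k ∈ Finset.range n, (γ k) ^ 2) +
          (∑ k ∈ Finset.range n, γ k *
            (θ k lam - Kθ k / 2 * (rnorm (Λ k - lam)) ^ 2 +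
              (γ k * ((rnorm (Gθ k (Λ k))) ^ 2 + C₁ ^ 2 / K * (rnorm (Λ k)) ^ 2) -
                θ k (Λ k)))) +
          (∑ k ∈ Finset.range n, γ k * pairE (X k - x) (M (k + 1))) +
          2 / K * (∑ k ∈ Finset.range n, (γ k) ^ 2 * (enormE (M (k + 1))) ^ 2) := by
  intro n x hx lam hlam
  -- nonnegativity of the dual iterates
  have hΛnn : ∀ k r, 0 ≤ Λ k r := by
    intro k
    induction k with
    | zero => exact hΛ0
    | succ k ih => intro r; rw [hΛ k r]; exact le_max_left _ _
  have hXmem : ∀ k, X k ∈ jointSet Xs := by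
    intro k i; rw [hX k i]; exact hΦmem i _
  -- the one-step inequality
  have hstep : ∀ k,
      (fenchelTot Xs ψ x (Y (k+1)) + (rnorm (lam - Λ (k+1))) ^ 2 / 2) -
        (fenchelTot Xs ψ x (Y k) + (rnorm (lam - Λ k)) ^ 2 / 2) ≤
      γ k * (pairE (X k - x) (v (X k) - gradT Gg (X k) (Λ k)) +
              ∑ r, (Λ k r - lam r) * g (X k) r) +
        2 * (C₂ ^ 2 / K + C₃ ^ 2 / 2) * (γ k) ^ 2 +
        γ k * (θ k lam - Kθ k / 2 * (rnorm (Λ k - lam)) ^ 2 +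
          (γ k * ((rnorm (Gθ k (Λ k))) ^ 2 + C₁ ^ 2 / K * (rnorm (Λ k)) ^ 2) - θ k (Λ k))) +
        γ k * pairE (X k - x) (M (k + 1)) +
        2 / K * ((γ k) ^ 2 * (enormE (M (k + 1))) ^ 2) := by
    intro k
    have hdelta : ∀ i j, Y (k+1) i j - Y k i j =
        γ k * (v (X k) i j + M (k+1) i j - gradT Gg (X k) (Λ k) i j) := by
      intro i j; simp only [hY k]; ring
    -- primal part
    have hprim : fenchelTot Xs ψ x (Y (k+1)) ≤ fenchelTot Xs ψ x (Y k) +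
        (∑ i, pairB (Y (k+1) i - Y k i) (X k i - x i)) +
        1 / (2 * K) * ∑ i, ∑ j, (Y (k+1) i j - Y k i j) ^ 2 := by
      unfold fenchelTot
      calc (∑ i, fenchelB (Xs i) (ψ i) (x i) (Y (k+1) i))
          ≤ ∑ i, (fenchelB (Xs i) (ψ i) (x i) (Y k i) +
              pairB (Y (k+1) i - Y k i) (Φ i (Y k i) - x i) +
              1 / (2 * K) * (bnorm (Y (k+1) i - Y k i)) ^ 2) :=
            Finset.sum_le_sum fun i _ =>
              fenchelB_step (hXconv i) hK (hψsc i) (hΦmem i) (hΦmax i) (x i) (Y k i) (Y (k+1) i)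
        _ = _ := by
            rw [Finset.sum_add_distrib, Finset.sum_add_distrib, Finset.mul_sum]
            congr 1
            · congr 1
              apply Finset.sum_congr rfl; intro i _
              rw [← hX k i]
            · apply Finset.sum_congr rfl; intro i _
              rw [sq_bnorm]
              apply congrArg
              apply Finset.sum_congr rfl; intro j _
              simp [Pi.sub_apply]
    have hpair : (∑ i, pairB (Y (k+1) i - Y k i) (X k i - x i)) =
        γ k * pairE (X k - x) (v (X k) - gradT Gg (X k) (Λ k)) +
          γ k * pairE (X k - x) (M (k+1)) := by
      simp only [pairE, pairB, Pi.sub_apply, Finset.mul_sum, ← Finset.sum_add_distrib]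
      apply Finset.sum_congr rfl; intro i _
      apply Finset.sum_congr rfl; intro j _
      rw [hdelta i j]; ring
    have hnormsum : (∑ i, ∑ j, (Y (k+1) i j - Y k i j) ^ 2) =
        (γ k) ^ 2 * ∑ i, ∑ j,
          (v (X k) i j + M (k+1) i j - gradT Gg (X k) (Λ k) i j) ^ 2 := by
      simp only [Finset.mul_sum]
      apply Finset.sum_congr rfl; intro i _
      apply Finset.sum_congr rfl; intro j _
      rw [hdelta i j]; ring
    have hv2 : (enormE (v (X k))) ^ 2 ≤ C₂ ^ 2 :=
      pow_le_pow_left₀ (enormE_nonneg _) (hC₂ (X k) (hXmem k)) 2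
    have hg2 : (enormE (gradT Gg (X k) (Λ k))) ^ 2 ≤ C₁ ^ 2 * (rnorm (Λ k)) ^ 2 := by
      have h := pow_le_pow_left₀ (enormE_nonneg _)
        (hC₁ (X k) (hXmem k) (Λ k) (hΛnn k)) 2
      calc (enormE (gradT Gg (X k) (Λ k))) ^ 2 ≤ (C₁ * rnorm (Λ k)) ^ 2 := h
      _ = C₁ ^ 2 * (rnorm (Λ k)) ^ 2 := by ring
    have hE : (∑ i, ∑ j, (v (X k) i j + M (k+1) i j - gradT Gg (X k) (Λ k) i j) ^ 2) ≤
        4 * C₂ ^ 2 + 4 * (enormE (M (k+1))) ^ 2 + 2 * (C₁ ^ 2 * (rnorm (Λ k)) ^ 2) := by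
      calc (∑ i, ∑ j, (v (X k) i j + M (k+1) i j - gradT Gg (X k) (Λ k) i j) ^ 2)
          ≤ ∑ i, ∑ j, (4 * (v (X k) i j) ^ 2 + 4 * (M (k+1) i j) ^ 2 +
              2 * (gradT Gg (X k) (Λ k) i j) ^ 2) := by
            apply Finset.sum_le_sum; intro i _
            apply Finset.sum_le_sum; intro j _
            nlinarith [sq_nonneg (v (X k) i j + M (k+1) i j + gradT Gg (X k) (Λ k) i j),
              sq_nonneg (v (X k) i j - M (k+1) i j)]
        _ = 4 * (∑ i, ∑ j, (v (X k) i j) ^ 2) + 4 * (∑ i, ∑ j, (M (k+1) i j) ^ 2) +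
              2 * (∑ i, ∑ j, (gradT Gg (X k) (Λ k) i j) ^ 2) := by
            simp [Finset.sum_add_distrib, Finset.mul_sum]
        _ ≤ _ := by
            rw [← sq_enormE, ← sq_enormE, ← sq_enormE]
            have hm : (enormE (M (k+1))) ^ 2 ≤ (enormE (M (k+1))) ^ 2 := le_refl _
            nlinarith [hv2, hg2]
    have hmulE : 1 / (2 * K) * ((γ k) ^ 2 *
        (∑ i, ∑ j, (v (X k) i j + M (k+1) i j - gradT Gg (X k) (Λ k) i j) ^ 2)) ≤
        2 * (C₂ ^ 2 / K) * (γ k) ^ 2 + 2 / K * ((γ k) ^ 2 * (enormE (M (k+1))) ^ 2) +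
          (γ k) ^ 2 * (C₁ ^ 2 / K * (rnorm (Λ k)) ^ 2) := by
      calc 1 / (2 * K) * ((γ k) ^ 2 *
          (∑ i, ∑ j, (v (X k) i j + M (k+1) i j - gradT Gg (X k) (Λ k) i j) ^ 2))
          ≤ 1 / (2 * K) * ((γ k) ^ 2 *
            (4 * C₂ ^ 2 + 4 * (enormE (M (k+1))) ^ 2 + 2 * (C₁ ^ 2 * (rnorm (Λ k)) ^ 2))) := by
            apply mul_le_mul_of_nonneg_left _ (by positivity)
            exact mul_le_mul_of_nonneg_left hE (by positivity)
        _ = _ := by ring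
    -- dual part
    have hproj : ∀ r, (lam r - Λ (k+1) r) ^ 2 ≤
        (lam r - (Λ k r + γ k * (g (X k) r - Gθ k (Λ k) r))) ^ 2 := by
      intro r
      rw [hΛ k r]
      rcases le_total (Λ k r + γ k * (g (X k) r - Gθ k (Λ k) r)) 0 with h | h
      · rw [max_eq_left h]
        nlinarith [mul_nonneg (hlam r) (neg_nonneg.2 h)]
      · rw [max_eq_right h]
    have hdual : (rnorm (lam - Λ (k+1))) ^ 2 ≤ (rnorm (lam - Λ k)) ^ 2 +
        2 * γ k * (∑ r, (Λ k r - lam r) * g (X k) r) +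
        2 * γ k * (∑ r, Gθ k (Λ k) r * (lam r - Λ k r)) +
        (γ k) ^ 2 * (∑ r, (g (X k) r - Gθ k (Λ k) r) ^ 2) := by
      rw [sq_rnorm, sq_rnorm]
      calc (∑ r, ((lam - Λ (k+1)) r) ^ 2)
          ≤ ∑ r, (lam r - (Λ k r + γ k * (g (X k) r - Gθ k (Λ k) r))) ^ 2 := by
            apply Finset.sum_le_sum; intro r _
            simpa [Pi.sub_apply] using hproj r
        _ = ∑ r, (((lam - Λ k) r) ^ 2 + 2 * γ k * ((Λ k r - lam r) * g (X k) r) +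
              2 * γ k * (Gθ k (Λ k) r * (lam r - Λ k r)) +
              (γ k) ^ 2 * ((g (X k) r - Gθ k (Λ k) r) ^ 2)) := by
            apply Finset.sum_congr rfl; intro r _
            simp only [Pi.sub_apply]; ring
        _ = _ := by simp [Finset.sum_add_distrib, Finset.mul_sum]
    obtain ⟨L, hL1, hL2⟩ := hθdiff k (Λ k)
    have hGθ := sc_grad hL1 hL2 (hθsc k) lam
    have hθmul := mul_le_mul_of_nonneg_left hGθ (le_of_lt (hγpos k))
    have hC3sq : (rnorm (g (X k))) ^ 2 ≤ C₃ ^ 2 :=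
      pow_le_pow_left₀ (rnorm_nonneg _) (hC₃ (X k) (hXmem k)) 2
    have hd2 : (∑ r, (g (X k) r - Gθ k (Λ k) r) ^ 2) ≤
        2 * C₃ ^ 2 + 2 * (rnorm (Gθ k (Λ k))) ^ 2 := by
      calc (∑ r, (g (X k) r - Gθ k (Λ k) r) ^ 2)
          ≤ ∑ r, (2 * (g (X k) r) ^ 2 + 2 * (Gθ k (Λ k) r) ^ 2) := by
            apply Finset.sum_le_sum; intro r _
            nlinarith [sq_nonneg (g (X k) r + Gθ k (Λ k) r)]
        _ = 2 * (∑ r, (g (X k) r) ^ 2) + 2 * (∑ r, (Gθ k (Λ k) r) ^ 2) := by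
            simp [Finset.sum_add_distrib, Finset.mul_sum]
        _ ≤ _ := by
            rw [← sq_rnorm, ← sq_rnorm]
            nlinarith [hC3sq]
    have hd2mul := mul_le_mul_of_nonneg_left hd2
      (show (0:ℝ) ≤ (γ k) ^ 2 / 2 by positivity)
    have hsymk : (rnorm (Λ k - lam)) ^ 2 = (rnorm (lam - Λ k)) ^ 2 := by
      rw [sq_rnorm, sq_rnorm]
      apply Finset.sum_congr rfl; intro r _
      simp only [Pi.sub_apply]; ring
    rw [hpair, hnormsum] at hprim
    rw [hsymk]
    linarith [hprim, hmulE, hdual, hθmul, hd2mul]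
  -- telescoping
  have key : ∀ m : ℕ,
      (fenchelTot Xs ψ x (Y m) + (rnorm (lam - Λ m)) ^ 2 / 2) -
        (fenchelTot Xs ψ x (Y 0) + (rnorm (lam - Λ 0)) ^ 2 / 2) ≤
      ∑ k ∈ Finset.range m,
        (γ k * (pairE (X k - x) (v (X k) - gradT Gg (X k) (Λ k)) +
              ∑ r, (Λ k r - lam r) * g (X k) r) +
          2 * (C₂ ^ 2 / K + C₃ ^ 2 / 2) * (γ k) ^ 2 +
          γ k * (θ k lam - Kθ k / 2 * (rnorm (Λ k - lam)) ^ 2 +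
            (γ k * ((rnorm (Gθ k (Λ k))) ^ 2 + C₁ ^ 2 / K * (rnorm (Λ k)) ^ 2) - θ k (Λ k))) +
          γ k * pairE (X k - x) (M (k + 1)) +
          2 / K * ((γ k) ^ 2 * (enormE (M (k + 1))) ^ 2)) := by
    intro m
    induction m with
    | zero => simp
    | succ m ih =>
        rw [Finset.sum_range_succ]
        linarith [hstep m, ih]
  calc (fenchelTot Xs ψ x (Y n) + (rnorm (lam - Λ n)) ^ 2 / 2) -
        (fenchelTot Xs ψ x (Y 0) + (rnorm (lam - Λ 0)) ^ 2 / 2) ≤ _ := key n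
  _ = _ := by
      simp only [Finset.sum_add_distrib, Finset.mul_sum]
end
end

section
/- Let g : R^D → R^R, let (X_n)_{n≥0} be any sequence in R^D, let γ_n ≥ 0 and α_n ≥ 0, and define the price iterates by Λ_0 = 0 and, componentwise for each r ∈ {1,…,R}, Λ_{n+1}^r = max(0, Λ_n^r + γ_n ( g_r(X_n) − α_n Λ_n^r )). Then for every r and every n ≥ 1: Σ_{k=0}^{n−1} γ_k g_r(X_k) ≤ ‖Λ_n‖₂ + Σ_{k=0}^{n−1} γ_k α_k ‖Λ_k‖₂. In particular, if Σ_{k=0}^{n−1} γ_k > 0, then CVio_n^r := ( Σ_{k=0}^{n−1} γ_k g_r(X_k) ) / ( Σ_{k=0}^{n−1} γ_k ) ≤ ( ‖Λ_n‖₂ + Σ_{k=0}^{n−1} γ_k α_k ‖Λ_k‖₂ ) / ( Σ_{k=0}^{n−1} γ_k ). -/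
open scoped BigOperators

noncomputable section

/-- **The prices bound the accumulated constraint violation.**
Let `g : ℝ^D → ℝ^R`, `(X_n)` a sequence in `ℝ^D`, `γ_n ≥ 0`, `α_n ≥ 0`, and define the
price iterates by `Λ_0 = 0` and componentwise
`Λ_{n+1}^r = max(0, Λ_n^r + γ_n (g_r(X_n) − α_n Λ_n^r))`.
Then for every resource `r` and every `n ≥ 1`:
`Σ_{k<n} γ_k g_r(X_k) ≤ ‖Λ_n‖₂ + Σ_{k<n} γ_k α_k ‖Λ_k‖₂`, and consequently, whenever
`Σ_{k<n} γ_k > 0`, the weighted average constraint violation `CVio_n^r` satisfies the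
corresponding bound. -/
theorem price_bounds_constraint_violation {D R : ℕ}
    (g : (Fin D → ℝ) → Fin R → ℝ) (X : ℕ → (Fin D → ℝ))
    (γ α : ℕ → ℝ) (hγ : ∀ n, 0 ≤ γ n) (hα : ∀ n, 0 ≤ α n)
    (Λ : ℕ → Fin R → ℝ) (hΛ0 : Λ 0 = 0)
    (hΛ : ∀ n r, Λ (n + 1) r = max 0 (Λ n r + γ n * (g (X n) r - α n * Λ n r))) :
    ∀ (r : Fin R) (n : ℕ), 1 ≤ n →
      (∑ k ∈ Finset.range n, γ k * g (X k) r ≤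
          rnorm (Λ n) + ∑ k ∈ Finset.range n, γ k * α k * rnorm (Λ k)) ∧
      (0 < ∑ k ∈ Finset.range n, γ k →
        (∑ k ∈ Finset.range n, γ k * g (X k) r) / (∑ k ∈ Finset.range n, γ k) ≤
          (rnorm (Λ n) + ∑ k ∈ Finset.range n, γ k * α k * rnorm (Λ k)) /
            (∑ k ∈ Finset.range n, γ k)) := by
  intro r n hn
  -- componentwise bound by the norm
  have hcomp : ∀ (m : ℕ) (s : Fin R), Λ m s ≤ rnorm (Λ m) := by
    intro m s
    rcases le_or_gt (Λ m s) 0 with h | h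
    · exact h.trans (Real.sqrt_nonneg _)
    · have hsq : (Λ m s) ^ 2 ≤ ∑ t, (Λ m t) ^ 2 :=
        Finset.single_le_sum (f := fun t => (Λ m t) ^ 2)
          (fun t _ => sq_nonneg _) (Finset.mem_univ s)
      calc Λ m s = Real.sqrt ((Λ m s) ^ 2) := by
            rw [Real.sqrt_sq h.le]
        _ ≤ rnorm (Λ m) := Real.sqrt_le_sqrt hsq
  -- main telescoping bound
  have key : ∀ m : ℕ, ∑ k ∈ Finset.range m, γ k * g (X k) r ≤
      Λ m r + ∑ k ∈ Finset.range m, γ k * α k * rnorm (Λ k) := by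
    intro m
    induction m with
    | zero => simp [hΛ0]
    | succ m ih =>
      rw [Finset.sum_range_succ, Finset.sum_range_succ]
      have hstep : Λ m r + γ m * (g (X m) r - α m * Λ m r) ≤ Λ (m + 1) r := by
        rw [hΛ m r]; exact le_max_right _ _
      have h1 : γ m * g (X m) r ≤ Λ (m + 1) r - Λ m r + γ m * α m * Λ m r := by
        nlinarith
      have h2 : γ m * α m * Λ m r ≤ γ m * α m * rnorm (Λ m) := by
        have := hcomp m r
        have hnn : 0 ≤ γ m * α m := mul_nonneg (hγ m) (hα m)
        nlinarith
      linarith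
  have main : ∑ k ∈ Finset.range n, γ k * g (X k) r ≤
      rnorm (Λ n) + ∑ k ∈ Finset.range n, γ k * α k * rnorm (Λ k) := by
    have := key n
    have := hcomp n r
    linarith
  refine ⟨main, fun hpos => ?_⟩
  gcongr
end
end
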